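/- Let μ > 0 and for r > 0 define G(r) = 2πλ r · exp(-(σ²μ/P)(r⁴ + z r²)) with z = (λπP/(σ²μ))(√μ·arctan(√μ) + 1). Then ∫₀^∞ G(r) dr = πλ·sqrt(πP/(σ²μ))·exp(z²μσ²/(4P))·Q(sqrt(z²μσ²/(2P))), where Q(x) = ∫_x^∞ e^{-t²/2}/√(2π) dt. -/

import Mathlib

/-!
Substituting `u = r²` turns the integral into `πλ ∫₀^∞ exp (-a (u² + z u)) du` with
`a = σ²μ/P`. Completing the square, `u² + z u = (u + z/2)² - z²/4`, leaves a Gaussian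
integral over the half-line `(z/2, ∞)`, which the rescaling `t = √(2a) v` identifies with
`√(π/a) · Q (z/2 · √(2a))`; and `z/2 · √(2a) = √(z² a / 2)` because `z ≥ 0`.
-/

noncomputable def gaussQ (x : ℝ) : ℝ :=
  ∫ t in Set.Ioi x, Real.exp (-t ^ 2 / 2) / Real.sqrt (2 * Real.pi)

open MeasureTheory Set Real

section ChangeOfVariables

variable {E : Type*} [NormedAddCommGroup E] [NormedSpace ℝ E]

theorem integral_comp_add_right_Ioi (f : ℝ → E) (a c : ℝ) :
    ∫ x in Ioi a, f (x + c) = ∫ x in Ioi (a + c), f x := by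
  have h := (measurePreserving_add_right volume c).setIntegral_preimage_emb
    (measurableEmbedding_addRight c) f (Ioi (a + c))
  rwa [preimage_add_const_Ioi, add_sub_cancel_right] at h

theorem integral_Ioi_smul_comp_sq (g : ℝ → E) :
    ∫ r in Ioi (0 : ℝ), r • g (r ^ 2) = (2 : ℝ)⁻¹ • ∫ u in Ioi (0 : ℝ), g u := by
  rw [← integral_comp_rpow_Ioi_of_pos (g := g) two_pos, ← integral_smul]
  refine setIntegral_congr_fun measurableSet_Ioi fun r _ => ?_
  norm_num [smul_smul, ← mul_assoc]

end ChangeOfVariables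

theorem integral_Ioi_exp_neg_mul_sq {a : ℝ} (ha : 0 < a) (x : ℝ) :
    ∫ v in Ioi x, exp (-a * v ^ 2) = sqrt (π / a) * gaussQ (x * sqrt (2 * a)) := by
  set b := sqrt (2 * a)
  have hb : 0 < b := by positivity
  have hb2 : b ^ 2 = 2 * a := sq_sqrt (by positivity)
  have hQ : gaussQ (x * b) = (sqrt (2 * π))⁻¹ * ∫ t in Ioi (x * b), exp (-t ^ 2 / 2) := by
    simp only [gaussQ, div_eq_inv_mul, integral_const_mul]
  have hsqrt : sqrt (π / a) = sqrt (2 * π) / b := by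
    rw [← sqrt_div (by positivity)]
    congr 1
    field_simp
  calc ∫ v in Ioi x, exp (-a * v ^ 2)
      = ∫ v in Ioi x, exp (-(v * b) ^ 2 / 2) := by
        refine setIntegral_congr_fun measurableSet_Ioi fun v _ => ?_
        rw [mul_pow, hb2]
        ring_nf
    _ = b⁻¹ * ∫ t in Ioi (x * b), exp (-t ^ 2 / 2) :=
        integral_comp_mul_right_Ioi (fun t => exp (-t ^ 2 / 2)) x hb
    _ = sqrt (π / a) * gaussQ (x * b) := by
        rw [hQ, hsqrt]
        field_simp

theorem integral_Ioi_exp_neg_mul_sq_add_mul {a : ℝ} (ha : 0 < a) (z : ℝ) :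
    ∫ u in Ioi (0 : ℝ), exp (-a * (u ^ 2 + z * u))
      = sqrt (π / a) * exp (a * z ^ 2 / 4) * gaussQ (z / 2 * sqrt (2 * a)) := by
  calc ∫ u in Ioi (0 : ℝ), exp (-a * (u ^ 2 + z * u))
      = ∫ u in Ioi (0 : ℝ), exp (a * z ^ 2 / 4) * exp (-a * (u + z / 2) ^ 2) := by
        refine setIntegral_congr_fun measurableSet_Ioi fun u _ => ?_
        rw [← exp_add]
        ring_nf
    _ = exp (a * z ^ 2 / 4) * ∫ v in Ioi (z / 2), exp (-a * v ^ 2) := by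
        rw [integral_const_mul, integral_comp_add_right_Ioi (fun v => exp (-a * v ^ 2)), zero_add]
    _ = _ := by
        rw [integral_Ioi_exp_neg_mul_sq ha]
        ring

/-- Closed-form spatial average at path-loss exponent 4. -/
theorem spatial_average_eta_four
    (lam P σ2 μ : ℝ) (hlam : 0 < lam) (hP : 0 < P) (hσ2 : 0 < σ2) (hμ : 0 < μ)
    (z : ℝ)
    (hz : z = (lam * Real.pi * P / (σ2 * μ)) * (Real.sqrt μ * Real.arctan (Real.sqrt μ) + 1)) :
    ∫ r in Set.Ioi (0 : ℝ),
        2 * Real.pi * lam * r * Real.exp (-(σ2 * μ / P) * (r ^ 4 + z * r ^ 2))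
      = Real.pi * lam * Real.sqrt (Real.pi * P / (σ2 * μ))
          * Real.exp (z ^ 2 * μ * σ2 / (4 * P))
          * gaussQ (Real.sqrt (z ^ 2 * μ * σ2 / (2 * P))) := by
  set a := σ2 * μ / P with ha_def
  have ha : 0 < a := by positivity
  have hz0 : 0 ≤ z := by rw [hz]; positivity
  have hsqrt : sqrt (π * P / (σ2 * μ)) = sqrt (π / a) := by congr 1; rw [ha_def]; field_simp
  have hexp : z ^ 2 * μ * σ2 / (4 * P) = a * z ^ 2 / 4 := by rw [ha_def]; field_simp
  have harg : sqrt (z ^ 2 * μ * σ2 / (2 * P)) = z / 2 * sqrt (2 * a) := by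
    rw [show z ^ 2 * μ * σ2 / (2 * P) = (z / 2) ^ 2 * (2 * a) by rw [ha_def]; field_simp,
      sqrt_mul' _ (by positivity), sqrt_sq (by positivity)]
  calc ∫ r in Ioi (0 : ℝ), 2 * π * lam * r * exp (-a * (r ^ 4 + z * r ^ 2))
      = 2 * π * lam * ∫ r in Ioi (0 : ℝ), r • exp (-a * ((r ^ 2) ^ 2 + z * r ^ 2)) := by
        rw [← integral_const_mul]
        refine setIntegral_congr_fun measurableSet_Ioi fun r _ => ?_
        rw [smul_eq_mul, ← pow_mul]
        ring
    _ = π * lam * ∫ u in Ioi (0 : ℝ), exp (-a * (u ^ 2 + z * u)) := by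
        rw [integral_Ioi_smul_comp_sq (fun u => exp (-a * (u ^ 2 + z * u))), smul_eq_mul]
        ring
    _ = _ := by
        rw [integral_Ioi_exp_neg_mul_sq_add_mul ha, hsqrt, hexp, harg]
        ring
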